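/- arXiv:1611.09721 — 2 statements merged into one kernel-verified Lean document; each statement's English description precedes it below -/
import Mathlib

section
/- Let R be a connected quantized Weyl algebra over K generated by x_1,...,x_n with parameters q_{ij} and r_{ij}. Then there exists q ∈ K^* such that {q_{ij} : 1 ≤ i ≠ j ≤ n} = {q, q^{-1}}. -/
noncomputable section

open FreeAlgebra

/-- The defining relations `x_i x_j = q_{ij} x_j x_i + r_{ij}` (`i ≠ j`) of a
connected quantized Weyl algebra (generators indexed `0,…,n-1`). -/
inductive CQWRel (K : Type) [Field K] (n : ℕ) (q r : Fin n → Fin n → K) :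
    FreeAlgebra K (Fin n) → FreeAlgebra K (Fin n) → Prop
  | mk (i j : Fin n) (hij : i ≠ j) :
      CQWRel K n q r (ι K i * ι K j)
        (q i j • (ι K j * ι K i) + algebraMap K (FreeAlgebra K (Fin n)) (r i j))

/-- The standard monomial `x_1^{a_1} ⋯ x_n^{a_n}` (product taken in increasing index order). -/
def stdMonomial {R : Type} [Ring R] (n : ℕ) (x : Fin n → R) (a : Fin n → ℕ) : R :=
  ((List.finRange n).map (fun i => x i ^ a i)).prod

/-- The family of standard monomials (indexed by exponent vectors) is a `K`-basis of `R`. -/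
def IsMonBasis (K : Type) [Field K] {R : Type} [Ring R] [Algebra K R] (n : ℕ)
    (x : Fin n → R) : Prop :=
  LinearIndependent K (fun a : Fin n → ℕ => stdMonomial n x a) ∧
    Submodule.span K (Set.range (fun a : Fin n → ℕ => stdMonomial n x a)) = ⊤

/-- The graph on the generators, with an edge between `i` and `j` iff `r_{ij} ≠ 0`,
is connected. -/
def GraphConnected {K : Type} [Field K] (n : ℕ) (r : Fin n → Fin n → K) : Prop :=
  ∀ i j : Fin n, Relation.ReflTransGen (fun a b : Fin n => a ≠ b ∧ r a b ≠ 0) i j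

/-!
Comparing the two ways of bracketing `x_k x_i x_j` (for distinct `i, j, k`) and reading off the
coefficient of `x_k` in the basis of standard monomials gives `r_{ij} = q_{ki} q_{kj} r_{ij}`.
So every edge `{i, j}` of the graph forces `q_{ki} q_{kj} = 1` for all other `k`. Fixing an edge
`{a, b}` and `Q = q_{ab}`, this relation propagates `q_{cd} ∈ {Q, Q⁻¹}` along the paths of the
graph: first from `a` to every `d` (for `q_{ad}`), then from `a` to every `c` (for all `q_{cd}`).
-/

section DivisionMonoid

variable {ι G : Type*} [DivisionMonoid G]

lemma inv_mem_pair_inv {g h : G} (hg : g ∈ ({h, h⁻¹} : Set G)) :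
    g⁻¹ ∈ ({h, h⁻¹} : Set G) := by
  rcases hg with rfl | rfl <;> simp

variable {E : ι → ι → Prop} {q : ι → ι → G}

lemma eq_inv_of_edge_of_edge (hE : ∀ i j, E i j → i ≠ j)
    (hinv : ∀ i j, i ≠ j → q j i = (q i j)⁻¹)
    (hF : ∀ i j k, E i j → k ≠ i → k ≠ j → q k i * q k j = 1)
    {a b x : ι} (hab : E a b) (hax : E a x) (hxb : x ≠ b) :
    q a x = (q a b)⁻¹ := by
  have hba : b ≠ a := (hE a b hab).symm
  have hxa : x ≠ a := (hE a x hax).symm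
  have hbx : q b x = (q b a)⁻¹ := eq_inv_of_mul_eq_one_right (hF a x b hax hba hxb.symm)
  have hxb' : q x a = (q x b)⁻¹ := eq_inv_of_mul_eq_one_left (hF a b x hab hxa hxb)
  rw [← hinv a b (hE a b hab)]
  apply inv_injective
  rw [← hbx, hinv x b hxb, ← hxb', hinv a x hxa.symm]

lemma mem_pair_of_reflTransGen (hE : ∀ i j, E i j → i ≠ j)
    (hinv : ∀ i j, i ≠ j → q j i = (q i j)⁻¹)
    (hF : ∀ i j k, E i j → k ≠ i → k ≠ j → q k i * q k j = 1)
    {a b d : ι} (hab : E a b) (had : Relation.ReflTransGen E a d) (hda : d ≠ a) :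
    q a d ∈ ({q a b, (q a b)⁻¹} : Set G) := by
  induction had with
  | refl => exact absurd rfl hda
  | @tail w w' _ hww' ih =>
    obtain rfl | hwa := eq_or_ne w a
    · by_cases hw'b : w' = b
      · exact .inl (congrArg _ hw'b)
      · exact .inr (eq_inv_of_edge_of_edge hE hinv hF hab hww' hw'b)
    · rw [eq_inv_of_mul_eq_one_right (hF w w' a hww' (Ne.symm hwa) (Ne.symm hda))]
      exact inv_mem_pair_inv (ih hwa)

lemma mem_of_edge_of_forall_mem (hE : ∀ i j, E i j → i ≠ j)
    (hinv : ∀ i j, i ≠ j → q j i = (q i j)⁻¹)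
    (hF : ∀ i j k, E i j → k ≠ i → k ≠ j → q k i * q k j = 1)
    {S : Set G} (hS : ∀ g ∈ S, g⁻¹ ∈ S) {c c' : ι} (hcc' : E c c')
    (hc : ∀ d, d ≠ c → q c d ∈ S) (d : ι) (hdc' : d ≠ c') : q c' d ∈ S := by
  obtain rfl | hdc := eq_or_ne d c
  · rw [hinv d c' (hE d c' hcc')]
    exact hS _ (hc c' (hE d c' hcc').symm)
  · rw [hinv d c' hdc', eq_inv_of_mul_eq_one_right (hF c c' d hcc' hdc hdc'), inv_inv,
      hinv c d (Ne.symm hdc)]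
    exact hS _ (hc d hdc)

lemma setOf_ne_eq_pair (hE : ∀ i j, E i j → i ≠ j)
    (hinv : ∀ i j, i ≠ j → q j i = (q i j)⁻¹)
    (hF : ∀ i j k, E i j → k ≠ i → k ≠ j → q k i * q k j = 1)
    {a b : ι} (hab : E a b) (hconn : ∀ c, Relation.ReflTransGen E a c) :
    {g : G | ∃ i j, i ≠ j ∧ q i j = g} = {q a b, (q a b)⁻¹} := by
  have hmem : ∀ c d, d ≠ c → q c d ∈ ({q a b, (q a b)⁻¹} : Set G) := by
    intro c
    induction hconn c with
    | refl => exact fun d hda => mem_pair_of_reflTransGen hE hinv hF hab (hconn d) hda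
    | tail _ hcc' ih =>
      exact mem_of_edge_of_forall_mem hE hinv hF (fun _ => inv_mem_pair_inv) hcc' ih
  ext g
  constructor
  · rintro ⟨i, j, hij, rfl⟩
    exact hmem i j hij.symm
  · rintro (rfl | rfl)
    · exact ⟨a, b, hE a b hab, rfl⟩
    · exact ⟨b, a, (hE a b hab).symm, hinv a b (hE a b hab)⟩

end DivisionMonoid

lemma stdMonomial_single {R : Type} [Ring R] (n : ℕ) (x : Fin n → R) (i : Fin n) :
    stdMonomial n x (Pi.single i 1) = x i := by
  have h := List.prod_map_eq_pow_single (l := List.finRange n) i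
    (fun l => x l ^ Pi.single i 1 l)
    (by intro a' ha' _; simp [ha'])
  unfold stdMonomial
  rw [h]
  simp [List.count_eq_one_of_mem (List.nodup_finRange n) (List.mem_finRange i)]

lemma linearIndependent_of_stdMonomial {K R : Type} [CommRing K] [Ring R] [Algebra K R] {n : ℕ}
    {x : Fin n → R} (h : LinearIndependent K (stdMonomial n x)) : LinearIndependent K x := by
  have hinj : Function.Injective (fun i : Fin n => Pi.single (M := fun _ => ℕ) i 1) :=
    fun i j hij => by simpa [Pi.single_apply, eq_comm] using congrFun hij j
  simpa [Function.comp_def, stdMonomial_single] using h.comp _ hinj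

lemma mul_eq_one_of_qcomm {K R : Type} [Field K] [Ring R] [Algebra K R] {x y z : R}
    {a b c s t u : K} (hli : LinearIndependent K ![x, y, z])
    (hxy : x * y = a • (y * x) + algebraMap K R s)
    (hzy : z * y = b • (y * z) + algebraMap K R t)
    (hzx : z * x = c • (x * z) + algebraMap K R u) (hs : s ≠ 0) :
    c * b = 1 := by
  have e1 : z * (x * y) =
      (a * b * c) • (y * x * z) + ((a * b * u) • y + (a * t) • x + s • z) := by
    rw [hxy, mul_add, mul_smul_comm, ← mul_assoc, hzy, add_mul, smul_mul_assoc, mul_assoc, hzx]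
    simp only [mul_add, smul_add, mul_smul_comm, smul_mul_assoc, Algebra.algebraMap_eq_smul_one,
      smul_smul, mul_one, one_mul, ← mul_assoc]
    module
  have e2 : (z * x) * y =
      (a * b * c) • (y * x * z) + ((c * b * s) • z + (c * t) • x + u • y) := by
    rw [hzx, add_mul, smul_mul_assoc, mul_assoc, hzy, mul_add, mul_smul_comm, ← mul_assoc, hxy]
    simp only [add_mul, smul_add, mul_smul_comm, smul_mul_assoc, Algebra.algebraMap_eq_smul_one,
      smul_smul, mul_one, one_mul, ← mul_assoc]
    module
  rw [mul_assoc, e1] at e2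
  have hcomb : (a * t - c * t) • x + (a * b * u - u) • y + (s - c * b * s) • z = 0 := by
    linear_combination (norm := module) e2
  have hz := Fintype.linearIndependent_iff.mp hli ![_, _, _]
    (by simpa [Fin.sum_univ_three] using hcomb) 2
  have : 1 * s = c * b * s := by simpa [sub_eq_zero] using hz
  exact (mul_right_cancel₀ hs this).symm

lemma LinearIndependent.mul_eq_one_of_qcomm {ι K R : Type} [Field K] [Ring R] [Algebra K R]
    {x : ι → R} {q r : ι → ι → K} (hli : LinearIndependent K x)
    (hx : ∀ i j, i ≠ j → x i * x j = q i j • (x j * x i) + algebraMap K R (r i j))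
    {i j k : ι} (hij : i ≠ j) (hki : k ≠ i) (hkj : k ≠ j) (hr : r i j ≠ 0) :
    q k i * q k j = 1 := by
  have hinj : Function.Injective ![i, j, k] := by
    rw [Matrix.vecCons, Fin.cons_injective_iff, Matrix.vecCons, Fin.cons_injective_iff]
    simp [hij, hki.symm, hkj.symm, Function.injective_of_subsingleton]
  refine _root_.mul_eq_one_of_qcomm ?_ (hx i j hij) (hx k j hkj) (hx k i hki) hr
  convert hli.comp _ hinj
  ext m
  fin_cases m <;> rfl

lemma CQWRel.mkAlgHom_ι_mul_ι {K : Type} [Field K] {n : ℕ} {q r : Fin n → Fin n → K}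
    {i j : Fin n} (hij : i ≠ j) :
    RingQuot.mkAlgHom K (CQWRel K n q r) (ι K i) * RingQuot.mkAlgHom K (CQWRel K n q r) (ι K j)
      = q i j • (RingQuot.mkAlgHom K (CQWRel K n q r) (ι K j)
          * RingQuot.mkAlgHom K (CQWRel K n q r) (ι K i))
        + algebraMap K (RingQuot (CQWRel K n q r)) (r i j) := by
  simpa using RingQuot.mkAlgHom_rel K (CQWRel.mk (q := q) (r := r) i j hij)

theorem stmt1_general (K : Type) [Field K] (n : ℕ) (hn : 2 ≤ n)
    (q r : Fin n → Fin n → K)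
    (hq0 : ∀ i j : Fin n, i ≠ j → q i j ≠ 0)
    (hqinv : ∀ i j : Fin n, i ≠ j → q j i = (q i j)⁻¹)
    (hbasis : IsMonBasis K n
      (fun i => RingQuot.mkAlgHom K (CQWRel K n q r) (ι K i)))
    (hconn : GraphConnected n r) :
    ∃ q0 : K, q0 ≠ 0 ∧
      {c : K | ∃ i j : Fin n, i ≠ j ∧ q i j = c} = {q0, q0⁻¹} := by
  have hli := linearIndependent_of_stdMonomial hbasis.1
  have h01 : (⟨0, by omega⟩ : Fin n) ≠ ⟨1, by omega⟩ := by simp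
  obtain ⟨a, b, hab⟩ : ∃ a b : Fin n, a ≠ b ∧ r a b ≠ 0 := by
    rcases (hconn _ _).cases_head with h | ⟨b, hb, -⟩
    · exact absurd h h01
    · exact ⟨_, b, hb⟩
  exact ⟨q a b, hq0 a b hab.1, setOf_ne_eq_pair (fun _ _ h => h.1) hqinv
    (fun _ _ _ hij hki hkj =>
      hli.mul_eq_one_of_qcomm (fun _ _ => CQWRel.mkAlgHom_ι_mul_ι) hij.1 hki hkj hij.2)
    hab (hconn a)⟩

/-- Corollary 2.10: for a connected quantized Weyl algebra `R` generated by `x_1,…,x_n`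
with parameters `q_{ij}` and `r_{ij}`, there exists `q ∈ K^*` such that
`{q_{ij} : 1 ≤ i ≠ j ≤ n} = {q, q⁻¹}`. -/
theorem stmt1 (K : Type) [Field K] [IsAlgClosed K] (n : ℕ) (hn : 2 ≤ n)
    (q r : Fin n → Fin n → K)
    (hq0 : ∀ i j : Fin n, i ≠ j → q i j ≠ 0)
    (hqinv : ∀ i j : Fin n, i ≠ j → q j i = (q i j)⁻¹)
    (hrinv : ∀ i j : Fin n, i ≠ j → r j i = -(q i j)⁻¹ * r i j)
    (hbasis : IsMonBasis K n
      (fun i => RingQuot.mkAlgHom K (CQWRel K n q r) (ι K i)))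
    (hconn : GraphConnected n r) :
    ∃ q0 : K, q0 ≠ 0 ∧
      {c : K | ∃ i j : Fin n, i ≠ j ∧ q i j = c} = {q0, q0⁻¹} :=
  stmt1_general K n hn q r hq0 hqinv hbasis hconn

end
end

section
/- In L_n^q: (1) for 1 ≤ i ≤ n, z_n x_i = x_i z_n if n is odd, and z_n x_i = q^{(-1)^i} x_i z_n if n is even; consequently z_n is a normal element of L_n^q (z_n L_n^q = L_n^q z_n). (2) For 0 ≤ i < j ≤ n, z_i z_j = q z_j z_i if j is even and i is odd, and z_i z_j = z_j z_i otherwise (i.e. if j is odd, or if i and j are both even). -/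
noncomputable section

open FreeAlgebra

/-- Defining relations of the linear connected quantized Weyl algebra `L_n^q`
(generators indexed `0,…,n-1`, corresponding to `x_1,…,x_n`). -/
inductive LRel (K : Type) [Field K] (n : ℕ) (q : K) :
    FreeAlgebra K (Fin n) → FreeAlgebra K (Fin n) → Prop
  | adj (i j : Fin n) (h : j.1 = i.1 + 1) :
      LRel K n q (ι K i * ι K j)
        (q • (ι K j * ι K i) + algebraMap K (FreeAlgebra K (Fin n)) (1 - q))
  | far_odd (i j : Fin n) (h : i.1 + 1 < j.1) (ho : Odd (j.1 - i.1)) :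
      LRel K n q (ι K i * ι K j) (q • (ι K j * ι K i))
  | far_even (i j : Fin n) (h : i.1 + 1 < j.1) (he : Even (j.1 - i.1)) :
      LRel K n q (ι K i * ι K j) (q⁻¹ • (ι K j * ι K i))

/-- The linear connected quantized Weyl algebra `L_n^q`. -/
abbrev LWeyl (K : Type) [Field K] (n : ℕ) (q : K) := RingQuot (LRel K n q)

/-- The generator `x_m` (1-based) of `L_n^q`. -/
def Lgen (K : Type) [Field K] (n : ℕ) (q : K) (m : ℕ) : LWeyl K n q :=
  if h : m - 1 < n then RingQuot.mkAlgHom K (LRel K n q) (ι K ⟨m - 1, h⟩) else 0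

/-- Defining relations of the cyclic connected quantized Weyl algebra `C_n^q`. -/
inductive CRel (K : Type) [Field K] (n : ℕ) (q : K) :
    FreeAlgebra K (Fin n) → FreeAlgebra K (Fin n) → Prop
  | adj (i j : Fin n) (h : j.1 = i.1 + 1) :
      CRel K n q (ι K i * ι K j)
        (q • (ι K j * ι K i) + algebraMap K (FreeAlgebra K (Fin n)) (1 - q))
  | cyc (i j : Fin n) (hi : i.1 = 0) (hj : j.1 = n - 1) :
      CRel K n q (ι K j * ι K i)
        (q • (ι K i * ι K j) + algebraMap K (FreeAlgebra K (Fin n)) (1 - q))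
  | far_odd (i j : Fin n) (h : i.1 + 1 < j.1) (ho : Odd (j.1 - i.1)) :
      CRel K n q (ι K i * ι K j) (q • (ι K j * ι K i))
  | far_even (i j : Fin n) (h : i.1 + 1 < j.1) (hj : j.1 + 1 < n) (he : Even (j.1 - i.1)) :
      CRel K n q (ι K i * ι K j) (q⁻¹ • (ι K j * ι K i))

/-- The cyclic connected quantized Weyl algebra `C_n^q`. -/
abbrev CWeyl (K : Type) [Field K] (n : ℕ) (q : K) := RingQuot (CRel K n q)

/-- The generator `x_m` (1-based) of `C_n^q`. -/
def Cgen (K : Type) [Field K] (n : ℕ) (q : K) (m : ℕ) : CWeyl K n q :=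
  if h : m - 1 < n then RingQuot.mkAlgHom K (CRel K n q) (ι K ⟨m - 1, h⟩) else 0

/-- The shifted sequence of elements `z_{-1} = 0`, `z_0 = 1`, `z_i = z_{i-1} x_i - z_{i-2}`:
here `zsh x k = z_{k-1}`, where `x` is 1-based access to the generators. -/
def zsh {R : Type} [Ring R] (x : ℕ → R) : ℕ → R
  | 0 => 0
  | 1 => 1
  | (k + 2) => zsh x (k + 1) * x (k + 1) - zsh x k

/-- A two-sided ideal is prime. -/
def IsTwoSidedPrime {R : Type} [Ring R] (P : TwoSidedIdeal R) : Prop :=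
  P ≠ ⊤ ∧ ∀ a b : R, (∀ r : R, a * r * b ∈ P) → a ∈ P ∨ b ∈ P

/-- `q` is not a root of unity. -/
def NotRootOfUnity {K : Type} [Field K] (q : K) : Prop :=
  ∀ k : ℕ, 0 < k → q ^ k ≠ 1

/-!
Since `z_k = z_{k-1} x_k - z_{k-2}`, any `y` with `x_i y = c_i y x_i` for `i ≤ k`, where the `c_i`
alternate between two mutually inverse scalars, satisfies `z_k y = c y z_k` with `c` depending
only on the parity of `k`: the coefficients of consecutive generators cancel. For `y = x_m`,
`m ≥ k + 2`, this gives `z_k x_m`; together with the relation between `x_{k+1}` and `x_k` it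
expresses `x_{k+1} z_k` through `z_{k+1}` and `z_{k-1}`, which in turn gives `z_k x_k` and
`z_k x_{k-1}`. From these two starting values the same propagation in `k` yields `z_k x_m` for all
`m < k`. Part (2) is the propagation once more with `y = z_j`, and `z_n` is normal because it
q-commutes with every generator.
-/

def QCommute {K R : Type*} [SMul K R] [Mul R] (c : K) (a b : R) : Prop :=
  a * b = c • (b * a)

def byParity {α : Type*} (e o : α) (k : ℕ) : α :=
  if Even k then e else o

section Parity

variable {α : Type*} (e o : α) (k : ℕ)

@[simp]
theorem byParity_add_one : byParity e o (k + 1) = byParity o e k := by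
  by_cases h : Even k <;> simp [byParity, h, Nat.even_add_one]

theorem byParity_add_two : byParity e o (k + 2) = byParity e o k := by
  simp

@[simp]
theorem byParity_zero : byParity e o 0 = e := by
  simp [byParity]

end Parity

theorem byParity_ne_zero {M₀ : Type*} [Zero M₀] {e o : M₀} (he : e ≠ 0) (ho : o ≠ 0)
    {k : ℕ} : byParity e o k ≠ 0 := by
  unfold byParity
  split_ifs
  exacts [he, ho]

theorem byParity_inv_eq_zpow {K : Type*} [DivisionRing K] (q : K) (i : ℕ) :
    byParity q q⁻¹ i = q ^ ((-1 : ℤ) ^ i) := by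
  rcases Nat.even_or_odd i with h | h
  · simp [byParity, h, h.neg_one_pow]
  · simp [byParity, Nat.not_even_iff_odd.2 h, h.neg_one_pow]

namespace QCommute

section Semiring

variable {K R : Type*} [CommSemiring K] [Semiring R] [Algebra K R] {c d : K} {a b y : R}

theorem zero_left : QCommute c (0 : R) y := by
  simp [QCommute]

theorem one_left : QCommute (1 : K) (1 : R) y := by
  simp [QCommute]

theorem commute (h : QCommute (1 : K) a b) : Commute a b := by
  rwa [QCommute, one_smul] at h

theorem mul_left (ha : QCommute c a y) (hb : QCommute d b y) : QCommute (c * d) (a * b) y := by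
  rw [QCommute, mul_assoc, hb, mul_smul_comm, ← mul_assoc, ha, smul_mul_assoc, smul_smul,
    mul_assoc, mul_comm c]

end Semiring

theorem sub_left {K R : Type*} [CommSemiring K] [Ring R] [Algebra K R] {c : K} {a b y : R}
    (ha : QCommute c a y) (hb : QCommute c b y) : QCommute c (a - b) y := by
  rw [QCommute, sub_mul, ha, hb, mul_sub, smul_sub]

theorem symm {K R : Type*} [Field K] [Ring R] [Algebra K R] {c : K} {a b : R} (hc : c ≠ 0)
    (h : QCommute c a b) : QCommute c⁻¹ b a := by
  rw [QCommute, h, smul_smul, inv_mul_cancel₀ hc, one_smul]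

end QCommute

section Continuant

variable {K R : Type} [CommSemiring K] [Ring R] [Algebra K R]

theorem zsh_add_two (x : ℕ → R) (k : ℕ) :
    zsh x (k + 2) = zsh x (k + 1) * x (k + 1) - zsh x k :=
  rfl

theorem zsh_mul_self (x : ℕ → R) (k : ℕ) :
    zsh x (k + 1) * x (k + 1) = zsh x (k + 2) + zsh x k := by
  rw [zsh_add_two, sub_add_cancel]

theorem qcommute_zsh {x : ℕ → R} {y : R} {e o a b : K} (hoa : o * a = e) (heb : e * b = o)
    {j N : ℕ} (h₀ : QCommute (byParity e o j) (zsh x j) y)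
    (h₁ : QCommute (byParity e o (j + 1)) (zsh x (j + 1)) y)
    (hx : ∀ i, j < i → i < N → QCommute (byParity b a i) (x i) y) :
    ∀ k, j ≤ k → k ≤ N → QCommute (byParity e o k) (zsh x k) y := by
  intro k hjk hkN
  induction k using Nat.strong_induction_on with
  | _ k ih =>
  rcases Nat.lt_or_ge k (j + 2) with hk | hk
  · obtain rfl | rfl : k = j ∨ k = j + 1 := by omega
    exacts [h₀, h₁]
  obtain ⟨i, rfl⟩ : ∃ i, k = i + 2 := ⟨k - 2, by omega⟩
  have hc : byParity e o (i + 1) * byParity b a (i + 1) = byParity e o (i + 2) := by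
    simp only [byParity_add_one]
    by_cases h : Even i <;> simp [byParity, h, hoa, heb]
  have h₂ := ih i (by omega) (by omega) (by omega)
  rw [← byParity_add_two, ← hc] at h₂
  rw [zsh_add_two, ← hc]
  exact ((ih (i + 1) (by omega) (by omega) (by omega)).mul_left
    (hx (i + 1) (by omega) (by omega))).sub_left h₂

theorem qcommute_zsh_of_alternating {x : ℕ → R} {y : R} {a b : K} (hab : a * b = 1) {N : ℕ}
    (hx : ∀ i, 0 < i → i < N → QCommute (byParity b a i) (x i) y) :
    ∀ k ≤ N, QCommute (byParity a 1 k) (zsh x k) y := fun k hk =>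
  qcommute_zsh (one_mul a) hab QCommute.zero_left
    (by rw [byParity_add_one, byParity_zero]; exact QCommute.one_left) hx k k.zero_le hk

end Continuant

section Normal

variable {K R : Type*} [Field K] [Ring R] [Algebra K R] {S : Set R} {z : R}

theorem exists_mul_eq_mul_of_qcommute_left (hS : Algebra.adjoin K S = ⊤)
    (hz : ∀ s ∈ S, ∃ c : K, QCommute c z s) (a : R) : ∃ b, z * a = b * z := by
  have ha : a ∈ Algebra.adjoin K S := hS ▸ Algebra.mem_top
  induction ha using Algebra.adjoin_induction with
  | mem s hs =>
    obtain ⟨c, hc⟩ := hz s hs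
    exact ⟨c • s, by rw [hc, smul_mul_assoc]⟩
  | algebraMap r => exact ⟨algebraMap K R r, (Algebra.commutes r z).symm⟩
  | add x y _ _ hx hy =>
    obtain ⟨bx, hbx⟩ := hx
    obtain ⟨b, hb⟩ := hy
    exact ⟨bx + b, by rw [mul_add, hbx, hb, add_mul]⟩
  | mul x y _ _ hx hy =>
    obtain ⟨bx, hbx⟩ := hx
    obtain ⟨b, hb⟩ := hy
    exact ⟨bx * b, by rw [← mul_assoc, hbx, mul_assoc, hb, mul_assoc]⟩

theorem exists_mul_eq_mul_of_qcommute_right (hS : Algebra.adjoin K S = ⊤)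
    (hz : ∀ s ∈ S, ∃ c : K, QCommute c s z) (a : R) : ∃ b, a * z = z * b := by
  have ha : a ∈ Algebra.adjoin K S := hS ▸ Algebra.mem_top
  induction ha using Algebra.adjoin_induction with
  | mem s hs =>
    obtain ⟨c, hc⟩ := hz s hs
    exact ⟨c • s, by rw [hc, mul_smul_comm]⟩
  | algebraMap r => exact ⟨algebraMap K R r, Algebra.commutes r z⟩
  | add x y _ _ hx hy =>
    obtain ⟨bx, hbx⟩ := hx
    obtain ⟨b, hb⟩ := hy
    exact ⟨bx + b, by rw [add_mul, hbx, hb, mul_add]⟩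
  | mul x y _ _ hx hy =>
    obtain ⟨bx, hbx⟩ := hx
    obtain ⟨b, hb⟩ := hy
    exact ⟨bx * b, by rw [mul_assoc, hb, ← mul_assoc, hbx, mul_assoc]⟩

theorem setOf_mul_eq_setOf_mul_of_qcommute (hS : Algebra.adjoin K S = ⊤)
    (hz : ∀ s ∈ S, ∃ c : K, c ≠ 0 ∧ QCommute c z s) :
    {w : R | ∃ a, w = z * a} = {w : R | ∃ a, w = a * z} := by
  ext w
  constructor
  · rintro ⟨a, rfl⟩
    exact exists_mul_eq_mul_of_qcommute_left hS (fun s hs => (hz s hs).imp fun _ h => h.2) a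
  · rintro ⟨a, rfl⟩
    refine exists_mul_eq_mul_of_qcommute_right hS (fun s hs => ?_) a
    obtain ⟨c, hc, h⟩ := hz s hs
    exact ⟨c⁻¹, h.symm hc⟩

end Normal

section Weyl

variable {K : Type} [Field K] {n : ℕ} {q : K}

local notation "X" => Lgen K n q
-- `Z k` is `z_{k-1}` in the notation of the paper.
local notation "Z" => zsh (Lgen K n q)

theorem Lgen_eq_mkAlgHom {m : ℕ} (hm : 1 ≤ m) (hmn : m ≤ n) :
    X m = RingQuot.mkAlgHom K (LRel K n q) (ι K ⟨m - 1, by omega⟩) := by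
  rw [Lgen, dif_pos]

theorem Lgen_add_one_mul_Lgen (hq : q ≠ 0) {m : ℕ} (hm : 1 ≤ m) (hmn : m + 1 ≤ n) :
    X (m + 1) * X m = q⁻¹ • (X m * X (m + 1)) - (q⁻¹ - 1) • (1 : LWeyl K n q) := by
  have h : X m * X (m + 1) = q • (X (m + 1) * X m) + algebraMap K _ (1 - q) := by
    rw [Lgen_eq_mkAlgHom hm (by omega), Lgen_eq_mkAlgHom (by omega) hmn, ← map_mul,
      RingQuot.mkAlgHom_rel K (LRel.adj _ _ (by simp; omega)), map_add, map_smul, map_mul,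
      AlgHom.commutes]
  rw [h, Algebra.algebraMap_eq_smul_one]
  match_scalars
  · field_simp
  · field_simp; ring

theorem Lgen_qcommute_Lgen {i j : ℕ} (hi : 1 ≤ i) (hij : i + 1 < j) (hj : j ≤ n) :
    QCommute (if Even i ↔ Even j then q⁻¹ else q) (X i) (X j) := by
  have hpar : Even (j - 1 - (i - 1)) ↔ (Even i ↔ Even j) := by
    rw [show j - 1 - (i - 1) = j - i by omega, Nat.even_sub (by omega)]
    exact iff_comm
  unfold QCommute
  rw [Lgen_eq_mkAlgHom hi (by omega), Lgen_eq_mkAlgHom (by omega) hj, ← map_mul, ← map_mul,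
    ← map_smul]
  split_ifs with h
  · exact RingQuot.mkAlgHom_rel K (LRel.far_even _ _ (by simp; omega) (hpar.2 h))
  · exact RingQuot.mkAlgHom_rel K
      (LRel.far_odd _ _ (by simp; omega) (Nat.not_even_iff_odd.1 (mt hpar.1 h)))

theorem Lgen_qcommute_Lgen_symm (hq : q ≠ 0) {i j : ℕ} (hi : 1 ≤ i) (hij : i + 1 < j)
    (hj : j ≤ n) : QCommute (if Even i ↔ Even j then q else q⁻¹) (X j) (X i) := by
  have h := (Lgen_qcommute_Lgen (q := q) hi hij hj).symm (by split_ifs <;> simp [hq])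
  rwa [apply_ite (·⁻¹), inv_inv] at h

theorem zsh_qcommute_Lgen_of_lt (hq : q ≠ 0) {k m : ℕ} (hkm : k < m) (hm : m ≤ n) :
    QCommute (byParity (byParity q q⁻¹ m) 1 k) (Z k) (X m) := by
  refine qcommute_zsh_of_alternating (b := byParity q⁻¹ q m) (N := m - 1) ?_ (fun i hi him => ?_)
    k (by omega)
  · by_cases h : Even m <;> simp [byParity, h, hq, parity_simps]
  · have hc : byParity (byParity q⁻¹ q m) (byParity q q⁻¹ m) i =
        if Even i ↔ Even m then q⁻¹ else q := by
      by_cases hi : Even i <;> by_cases hm : Even m <;> simp [byParity, hi, hm]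
    rw [hc]
    exact Lgen_qcommute_Lgen hi (by omega) hm

theorem Lgen_add_one_mul_zsh_add_one (hq : q ≠ 0) {t : ℕ} (ht : t + 1 ≤ n) :
    X (t + 1) * Z (t + 1) = byParity 1 q⁻¹ t • Z (t + 2) + byParity q 1 t • Z t := by
  rcases t with _ | u
  · simp [zsh]
  set γ₁ := byParity (byParity q q⁻¹ (u + 2)) 1 (u + 1)
  set γ₀ := byParity (byParity q q⁻¹ (u + 2)) 1 u
  have hq' : byParity q q⁻¹ (u + 2) ≠ 0 := byParity_ne_zero hq (inv_ne_zero hq)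
  have hγ₁ : γ₁ ≠ 0 := byParity_ne_zero hq' one_ne_zero
  have hγ₀ : γ₀ ≠ 0 := byParity_ne_zero hq' one_ne_zero
  have h₁ := (zsh_qcommute_Lgen_of_lt hq (k := u + 1) (m := u + 2) (by omega) ht).symm hγ₁
  have h₀ := (zsh_qcommute_Lgen_of_lt hq (k := u) (m := u + 2) (by omega) ht).symm hγ₀
  have hγ : γ₀⁻¹ = γ₁⁻¹ * q⁻¹ := by
    by_cases h : Even u <;> simp [γ₀, γ₁, byParity, h, hq, parity_simps]
  have hα : byParity 1 q⁻¹ (u + 1) = γ₁⁻¹ * q⁻¹ := by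
    by_cases h : Even u <;> simp [γ₁, byParity, h, hq, parity_simps]
  have hβ : byParity q 1 (u + 1) = γ₁⁻¹ := by
    by_cases h : Even u <;> simp [γ₁, byParity, h, parity_simps]
  calc X (u + 2) * Z (u + 2) = X (u + 2) * Z (u + 1) * X (u + 1) - X (u + 2) * Z u := by
        rw [zsh_add_two, mul_sub, mul_assoc]
    _ = γ₁⁻¹ • (Z (u + 1) * (X (u + 2) * X (u + 1))) - γ₀⁻¹ • (Z u * X (u + 2)) := by
        rw [h₁, h₀, smul_mul_assoc, mul_assoc]
    _ = γ₁⁻¹ • (q⁻¹ • (Z (u + 1) * X (u + 1) * X (u + 2)) - (q⁻¹ - 1) • Z (u + 1))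
          - γ₀⁻¹ • (Z u * X (u + 2)) := by
        rw [Lgen_add_one_mul_Lgen hq (by omega) ht, mul_sub, mul_smul_comm, mul_smul_comm, mul_one,
          mul_assoc]
    _ = γ₁⁻¹ • (q⁻¹ • (Z (u + 3) + Z (u + 1) + Z u * X (u + 2))
            - (q⁻¹ - 1) • Z (u + 1)) - γ₀⁻¹ • (Z u * X (u + 2)) := by
        rw [zsh_mul_self, add_mul, zsh_mul_self]
    _ = _ := by
        rw [hγ, hα, hβ]
        module

theorem zsh_add_two_qcommute_Lgen_add_one (hq : q ≠ 0) {t : ℕ} (ht : t + 1 ≤ n) :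
    QCommute (byParity 1 q t) (Z (t + 2)) (X (t + 1)) := by
  set γ := byParity (byParity q q⁻¹ (t + 1)) 1 t
  have hγ : byParity q 1 t * γ = 1 := by
    by_cases h : Even t <;> simp [γ, byParity, h, hq, parity_simps]
  have hF := zsh_qcommute_Lgen_of_lt hq (k := t) (m := t + 1) (by omega) ht
  have key : QCommute (byParity 1 q⁻¹ t) (X (t + 1)) (Z (t + 2)) := by
    calc X (t + 1) * Z (t + 2) = X (t + 1) * Z (t + 1) * X (t + 1) - X (t + 1) * Z t := by
          rw [zsh_add_two, mul_sub, mul_assoc]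
      _ = byParity 1 q⁻¹ t • (Z (t + 2) * X (t + 1)) + byParity q 1 t • (Z t * X (t + 1))
            - X (t + 1) * Z t := by
          rw [Lgen_add_one_mul_zsh_add_one hq ht, add_mul, smul_mul_assoc, smul_mul_assoc]
      _ = _ := by
          rw [hF, smul_smul, hγ, one_smul, add_sub_cancel_right]
  have hc : (byParity 1 q⁻¹ t)⁻¹ = byParity 1 q t := by
    by_cases h : Even t <;> simp [byParity, h]
  rw [← hc]
  exact key.symm (byParity_ne_zero one_ne_zero (inv_ne_zero hq))

theorem zsh_add_three_qcommute_Lgen_add_one (hq : q ≠ 0) {t : ℕ} (ht : t + 2 ≤ n) :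
    QCommute (byParity q⁻¹ 1 t) (Z (t + 3)) (X (t + 1)) := by
  set δ := byParity 1 q t
  have hδα : δ * byParity 1 q⁻¹ t = 1 := by
    by_cases h : Even t <;> simp [δ, byParity, h, hq]
  have hδβ : q⁻¹ * δ * byParity q 1 t = 1 := by
    by_cases h : Even t <;> simp [δ, byParity, h, hq]
  have hc : byParity q⁻¹ 1 t = q⁻¹ * δ := by
    by_cases h : Even t <;> simp [δ, byParity, h, hq]
  calc Z (t + 3) * X (t + 1) = Z (t + 2) * (X (t + 2) * X (t + 1)) - Z (t + 1) * X (t + 1) := by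
        rw [zsh_add_two, sub_mul, mul_assoc]
    _ = q⁻¹ • (Z (t + 2) * X (t + 1) * X (t + 2)) - (q⁻¹ - 1) • Z (t + 2)
          - (Z (t + 2) + Z t) := by
        rw [Lgen_add_one_mul_Lgen hq (by omega) ht, zsh_mul_self, mul_sub, mul_smul_comm,
          mul_smul_comm, mul_one, mul_assoc]
    _ = (q⁻¹ * δ) • (X (t + 1) * Z (t + 3) + X (t + 1) * Z (t + 1))
          - (q⁻¹ - 1) • Z (t + 2) - (Z (t + 2) + Z t) := by
        rw [zsh_add_two_qcommute_Lgen_add_one hq (by omega), smul_mul_assoc, mul_assoc,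
          zsh_mul_self, smul_smul, mul_add]
    _ = _ := by
        rw [Lgen_add_one_mul_zsh_add_one hq (by omega), smul_add, smul_add, smul_smul, smul_smul,
          mul_assoc, hδα, hδβ, hc]
        module

theorem zsh_qcommute_Lgen_of_gt (hq : q ≠ 0) {k m : ℕ} (hm : 1 ≤ m) (hmk : m < k)
    (hk : k ≤ n + 1) : QCommute (byParity 1 (byParity q q⁻¹ m) k) (Z k) (X m) := by
  obtain ⟨t, rfl⟩ : ∃ t, m = t + 1 := ⟨m - 1, by omega⟩
  have h₀ : QCommute (byParity 1 (byParity q q⁻¹ (t + 1)) (t + 2)) (Z (t + 2)) (X (t + 1)) := by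
    have hc : byParity 1 (byParity q q⁻¹ (t + 1)) (t + 2) = byParity 1 q t := by
      by_cases h : Even t <;> simp [byParity, h, parity_simps]
    rw [hc]
    exact zsh_add_two_qcommute_Lgen_add_one hq (by omega)
  rcases (show t + 1 = n ∨ t + 2 ≤ n by omega) with rfl | htn
  · obtain rfl : k = t + 2 := by omega
    exact h₀
  refine qcommute_zsh (a := byParity q⁻¹ q (t + 1)) (b := byParity q q⁻¹ (t + 1)) ?_ ?_ h₀ ?_
    (fun i hi hin => ?_) k (by omega) hk
  · by_cases h : Even t <;> simp [byParity, h, hq, parity_simps]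
  · by_cases h : Even t <;> simp [byParity, h, parity_simps]
  · have hc : byParity 1 (byParity q q⁻¹ (t + 1)) (t + 2 + 1) = byParity q⁻¹ 1 t := by
      by_cases h : Even t <;> simp [byParity, h, parity_simps]
    rw [hc]
    exact zsh_add_three_qcommute_Lgen_add_one hq htn
  · have hc : byParity (byParity q q⁻¹ (t + 1)) (byParity q⁻¹ q (t + 1)) i =
        if Even (t + 1) ↔ Even i then q else q⁻¹ := by
      by_cases hi : Even i <;> by_cases h : Even t <;> simp [byParity, hi, h, parity_simps]
    rw [hc]
    exact Lgen_qcommute_Lgen_symm hq (by omega) (by omega) (by omega)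

theorem Lgen_add_one (i : Fin n) : X (i + 1) = RingQuot.mkAlgHom K (LRel K n q) (ι K i) := by
  simp [Lgen]

theorem adjoin_range_Lgen : Algebra.adjoin K (Set.range fun i : Fin n => X (i + 1)) = ⊤ := by
  have h : (Set.range fun i : Fin n => X (i + 1)) =
      RingQuot.mkAlgHom K (LRel K n q) '' Set.range (ι K) := by
    rw [← Set.range_comp]
    exact congrArg Set.range (funext Lgen_add_one)
  rw [h, Algebra.adjoin_image, FreeAlgebra.adjoin_range_ι, Algebra.map_top,
    AlgHom.range_eq_top]
  exact RingQuot.mkAlgHom_surjective K _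

theorem zsh_qcommute_zsh (hq : q ≠ 0) {i j : ℕ} (hij : i < j) (hj : j ≤ n) :
    QCommute (byParity 1 (byParity q 1 j) i) (Z (i + 1)) (Z (j + 1)) := by
  rw [← byParity_add_one]
  refine qcommute_zsh_of_alternating (b := byParity q⁻¹ 1 j) ?_ (fun m hm hmj => ?_) (i + 1) hij
  · by_cases h : Even j <;> simp [byParity, h, hq]
  · have hc : (byParity 1 (byParity q q⁻¹ m) (j + 1))⁻¹ =
        byParity (byParity q⁻¹ 1 j) (byParity q 1 j) m := by
      by_cases hm : Even m <;> by_cases h : Even j <;> simp [byParity, hm, h, parity_simps]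
    rw [← hc]
    exact (zsh_qcommute_Lgen_of_gt hq hm (by omega) (by omega)).symm
      (byParity_ne_zero one_ne_zero (byParity_ne_zero hq (inv_ne_zero hq)))

end Weyl

theorem stmt7_general (K : Type) [Field K] (n : ℕ) (q : K) (hq0 : q ≠ 0) :
    let x : ℕ → LWeyl K n q := Lgen K n q
    let z : ℕ → LWeyl K n q := fun j => zsh x (j + 1)
    (∀ i : ℕ, 1 ≤ i → i ≤ n →
        (Odd n → z n * x i = x i * z n) ∧
        (Even n → z n * x i = (q ^ ((-1 : ℤ) ^ i)) • (x i * z n))) ∧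
      ({w : LWeyl K n q | ∃ a, w = z n * a} = {w : LWeyl K n q | ∃ a, w = a * z n}) ∧
      (∀ i j : ℕ, i < j → j ≤ n →
        (Even j → Odd i → z i * z j = q • (z j * z i)) ∧
        (Odd j ∨ (Even j ∧ Even i) → z i * z j = z j * z i)) := by
  intro x z
  have hzx : ∀ i, 1 ≤ i → i ≤ n →
      QCommute (byParity (byParity q q⁻¹ i) 1 n) (z n) (x i) := fun i hi hin => by
    simpa using zsh_qcommute_Lgen_of_gt hq0 hi (k := n + 1) (by omega) le_rfl
  refine ⟨fun i hi hin => ⟨fun hn => ?_, fun hn => ?_⟩, ?_,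
    fun i j hij hjn => ⟨fun hj hi => ?_, fun hji => ?_⟩⟩
  · simpa [QCommute, byParity, Nat.not_even_iff_odd.2 hn] using hzx i hi hin
  · have h := hzx i hi hin
    rwa [byParity, if_pos hn, byParity_inv_eq_zpow] at h
  · refine setOf_mul_eq_setOf_mul_of_qcommute adjoin_range_Lgen ?_
    rintro _ ⟨i, rfl⟩
    exact ⟨_, byParity_ne_zero (byParity_ne_zero hq0 (inv_ne_zero hq0)) one_ne_zero,
      hzx (i + 1) (by omega) (by omega)⟩
  · simpa [QCommute, byParity, hj, Nat.not_even_iff_odd.2 hi] using zsh_qcommute_zsh hq0 hij hjn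
  · have h := zsh_qcommute_zsh hq0 hij hjn
    have hc : byParity 1 (byParity q 1 j) i = 1 := by
      rcases hji with hj | ⟨hj, hi⟩
      · simp [byParity, Nat.not_even_iff_odd.2 hj]
      · simp [byParity, hi]
    rw [hc] at h
    exact h.commute.eq

/-- Corollary 3.5: in `L_n^q`: (1) `z_n x_i = x_i z_n` if `n` is odd and
`z_n x_i = q^{(-1)^i} x_i z_n` if `n` is even, for `1 ≤ i ≤ n`; consequently `z_n` is a
normal element (`z_n L_n^q = L_n^q z_n`).  (2) For `0 ≤ i < j ≤ n`, `z_i z_j = q z_j z_i`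
if `j` is even and `i` is odd, and `z_i z_j = z_j z_i` otherwise. -/
theorem stmt7 (K : Type) [Field K] [IsAlgClosed K] (n : ℕ) (hn : 3 ≤ n) (q : K)
    (hq0 : q ≠ 0) (hq1 : q ≠ 1) :
    let x : ℕ → LWeyl K n q := Lgen K n q
    let z : ℕ → LWeyl K n q := fun j => zsh x (j + 1)
    (∀ i : ℕ, 1 ≤ i → i ≤ n →
        (Odd n → z n * x i = x i * z n) ∧
        (Even n → z n * x i = (q ^ ((-1 : ℤ) ^ i)) • (x i * z n))) ∧
      ({w : LWeyl K n q | ∃ a, w = z n * a} = {w : LWeyl K n q | ∃ a, w = a * z n}) ∧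
      (∀ i j : ℕ, i < j → j ≤ n →
        (Even j → Odd i → z i * z j = q • (z j * z i)) ∧
        (Odd j ∨ (Even j ∧ Even i) → z i * z j = z j * z i)) :=
  stmt7_general K n q hq0

end
end
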